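/- Suppose a, v₁,…,v₈ are real numbers with (v₁,…,v₈) a solution to U₈ v = (1,1,1,1,1,a,a,a)^T, where U₈ is the 8×8 Gram matrix [[3,1,1,1,0,0,0,1],[1,3,1,0,1,1,0,0],[1,1,3,0,0,0,1,0],[1,0,0,3,1,1,1,0],[0,1,0,1,3,0,1,1],[0,1,0,1,0,3,1,1],[0,0,1,1,1,1,3,1],[1,0,0,0,1,1,1,3]]. Then v₇ = (a-1)/3. In particular, if 0 < a < 1 then v₇ < 0. -/

import Mathlib

/-!
The row vector `w = (0, 1, -1, 0, -1, -1, 2, 0)` satisfies `w U₈ = 3 e₇`. Pairing the system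
`U₈ v = b` with `w` therefore gives `3 v₇ = w ⬝ b = a - 1`.
-/

noncomputable def U8 : Matrix (Fin 8) (Fin 8) ℝ :=
  !![3,1,1,1,0,0,0,1;
     1,3,1,0,1,1,0,0;
     1,1,3,0,0,0,1,0;
     1,0,0,3,1,1,1,0;
     0,1,0,1,3,0,1,1;
     0,1,0,1,0,3,1,1;
     0,0,1,1,1,1,3,1;
     1,0,0,0,1,1,1,3]

open Matrix

theorem mul_eq_dotProduct_of_vecMul_eq_single {m n R : Type*} [Fintype m] [Fintype n]
    [DecidableEq n] [NonUnitalSemiring R] {A : Matrix m n R} {w b : m → R} {v : n → R} {i : n}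
    {c : R} (hw : w ᵥ* A = Pi.single i c) (h : A *ᵥ v = b) : c * v i = w ⬝ᵥ b := by
  rw [← h, dotProduct_mulVec, hw, single_dotProduct]

theorem vecMul_U8 : ![0, 1, -1, 0, -1, -1, 2, 0] ᵥ* U8 = Pi.single 6 3 := by
  ext j
  fin_cases j <;> simp [U8, vecMul, dotProduct, Fin.sum_univ_eight] <;> norm_num

/-- Any solution of `U8 v = (1,1,1,1,1,a,a,a)ᵀ` has `v₇ = (a-1)/3`; in
particular if `0 < a < 1` then `v₇ < 0`. -/
theorem stmt14 (a : ℝ) (v : Fin 8 → ℝ)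
    (h : U8.mulVec v = ![1,1,1,1,1,a,a,a]) :
    v 6 = (a - 1)/3 ∧ (0 < a → a < 1 → v 6 < 0) := by
  have hv : 3 * v 6 = a - 1 := by
    rw [mul_eq_dotProduct_of_vecMul_eq_single vecMul_U8 h]
    simp [dotProduct, Fin.sum_univ_eight]
    ring
  exact ⟨by linarith, fun _ ha => by linarith⟩
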